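/- Disjunction splits for purely probabilistic programs: let s be a purely probabilistic pGCL program (containing no demonic choice ⊓), ε a valuation, φ₁, φ₂ pDL formulae, and p an expectation lower bound. If ε ⊨ [s]_p (φ₁ ∨ φ₂), then there exist expectation lower bounds p₁, p₂ with p₁ + p₂ ≥ p everywhere such that ε ⊨ [s]_{p₁} φ₁ and ε ⊨ [s]_{p₂} φ₂. -/

import Mathlib

namespace PGCL

/-- Program valuations: maps from program variables to real values. -/
abbrev PVal : Type := String → ℝ

/-- Logical environments: maps from logical variables to their values.
    Logical variables are disjoint from program variables and cannot be
    accessed by programs. -/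
abbrev LEnv : Type := String → ℝ

/-- Syntax of the probabilistic guarded command language pGCL.
    Expressions are embedded shallowly as functions of the valuation. -/
inductive Stmt : Type
  | skip : Stmt
  | assign (x : String) (e : PVal → ℝ) : Stmt
  | seq (s₁ s₂ : Stmt) : Stmt
  /-- demonic (non-deterministic) choice `s₁ ⊓ s₂` -/
  | dem (s₁ s₂ : Stmt) : Stmt
  /-- probabilistic choice `s₁ [e] s₂` -/
  | prob (e : PVal → ℝ) (s₁ s₂ : Stmt) : Stmt
  | ifte (e : PVal → Bool) (s₁ s₂ : Stmt) : Stmt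
  | whileLoop (e : PVal → Bool) (s : Stmt) : Stmt

/-- States of the MDP semantics: a valuation paired with the remaining program.
    `(ε, Stmt.skip)` is final. -/
abbrev PState : Type := PVal × Stmt

/-- A positional policy resolves each demonic choice (true = left branch). -/
abbrev Policy : Type := PState → Bool

/-- One-step transition relation of the MDP semantics of pGCL, under policy `π`:
    `Step π σ p σ'` means σ steps to σ' with probability `p`. -/
inductive Step (π : Policy) : PState → ℝ → PState → Prop
  | assign {ε : PVal} {x : String} {e : PVal → ℝ} :
      Step π (ε, Stmt.assign x e) 1 (Function.update ε x (e ε), Stmt.skip)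
  | seqSkip {ε ε' : PVal} {s₁ s₂ : Stmt} {p : ℝ} :
      Step π (ε, s₁) p (ε', s₂) → Step π (ε, Stmt.seq Stmt.skip s₁) p (ε', s₂)
  | seqStep {ε ε' : PVal} {s₁ s₂ s : Stmt} {p : ℝ} :
      Step π (ε, s₁) p (ε', s₂) → Step π (ε, Stmt.seq s₁ s) p (ε', Stmt.seq s₂ s)
  | probL {ε : PVal} {e : PVal → ℝ} {s₁ s₂ : Stmt} :
      0 ≤ e ε → e ε ≤ 1 → Step π (ε, Stmt.prob e s₁ s₂) (e ε) (ε, s₁)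
  | probR {ε : PVal} {e : PVal → ℝ} {s₁ s₂ : Stmt} :
      0 ≤ e ε → e ε ≤ 1 → Step π (ε, Stmt.prob e s₁ s₂) (1 - e ε) (ε, s₂)
  | demL {ε : PVal} {s₁ s₂ : Stmt} :
      π (ε, Stmt.dem s₁ s₂) = true → Step π (ε, Stmt.dem s₁ s₂) 1 (ε, s₁)
  | demR {ε : PVal} {s₁ s₂ : Stmt} :
      π (ε, Stmt.dem s₁ s₂) = false → Step π (ε, Stmt.dem s₁ s₂) 1 (ε, s₂)
  | iteT {ε : PVal} {e : PVal → Bool} {s₁ s₂ : Stmt} :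
      e ε = true → Step π (ε, Stmt.ifte e s₁ s₂) 1 (ε, s₁)
  | iteF {ε : PVal} {e : PVal → Bool} {s₁ s₂ : Stmt} :
      e ε = false → Step π (ε, Stmt.ifte e s₁ s₂) 1 (ε, s₂)
  | whileT {ε : PVal} {e : PVal → Bool} {s : Stmt} :
      e ε = true →
        Step π (ε, Stmt.whileLoop e s) 1 (ε, Stmt.seq s (Stmt.whileLoop e s))
  | whileF {ε : PVal} {e : PVal → Bool} {s : Stmt} :
      e ε = false → Step π (ε, Stmt.whileLoop e s) 1 (ε, Stmt.skip)

/-- Finite paths under a policy `π` from a state to a final state. -/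
inductive MPath (π : Policy) : PState → Type
  | nil (ε : PVal) : MPath π (ε, Stmt.skip)
  | cons {σ σ' : PState} (p : ℝ) (h : Step π σ p σ') (rest : MPath π σ') : MPath π σ

/-- The probability of a path: the product of its transition probabilities. -/
noncomputable def MPath.prob {π : Policy} : {σ : PState} → MPath π σ → ℝ
  | _, .nil _ => 1
  | _, .cons p _ rest => p * rest.prob

/-- The valuation in the final state of a path. -/
def MPath.finalVal {π : Policy} : {σ : PState} → MPath π σ → PVal
  | _, .nil ε => ε
  | _, .cons _ _ rest => rest.finalVal

/-- Expected reward `E_{σ,π} r`: the sum over all paths from σ under π of the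
    probability of the path times the reward of its final valuation. -/
noncomputable def expReward (π : Policy) (σ : PState) (r : PVal → ℝ) : ℝ :=
  ∑' ρ : MPath π σ, ρ.prob * r ρ.finalVal

/-- Expectation `𝔼_σ r`: infimum over all policies of the expected reward. -/
noncomputable def expectation (σ : PState) (r : PVal → ℝ) : ℝ :=
  ⨅ π : Policy, expReward π σ r

open Classical in
/-- Characteristic (indicator) function of a proposition. -/
noncomputable def ind (P : Prop) : ℝ := if P then 1 else 0

/-- Formulae of probabilistic dynamic logic pDL. Atomic formulae are embedded
    shallowly as predicates over the program valuation and logical environment. -/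
inductive Formula : Type
  | atom (A : PVal → LEnv → Prop) : Formula
  | neg (φ : Formula) : Formula
  | conj (φ₁ φ₂ : Formula) : Formula
  /-- universal quantification over the logical variable `l` (domain ℝ) -/
  | all (l : String) (φ : Formula) : Formula
  /-- the p-box modality `[s]_p φ` -/
  | box (s : Stmt) (p : PVal → ℝ) (φ : Formula) : Formula

/-- Satisfaction `ε, η ⊨ φ` of pDL formulae. -/
def Sat : Formula → PVal → LEnv → Prop
  | .atom A, ε, η => A ε η
  | .neg φ, ε, η => ¬ Sat φ ε η
  | .conj φ₁ φ₂, ε, η => Sat φ₁ ε η ∧ Sat φ₂ ε η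
  | .all l φ, ε, η => ∀ v : ℝ, Sat φ ε (Function.update η l v)
  | .box s p φ, ε, η => p ε ≤ expectation (ε, s) (fun ε' => ind (Sat φ ε' η))

/-- Disjunction `φ₁ ∨ φ₂ := ¬(¬φ₁ ∧ ¬φ₂)`. -/
def Formula.disj (φ₁ φ₂ : Formula) : Formula := .neg (.conj (.neg φ₁) (.neg φ₂))

/-- Existential quantification `∃l·φ := ¬∀l·¬φ`. -/
def Formula.ex (l : String) (φ : Formula) : Formula := .neg (.all l (.neg φ))

/-- A program is purely probabilistic if it contains no demonic choice. -/
def DemFree : Stmt → Prop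
  | .skip => True
  | .assign _ _ => True
  | .seq s₁ s₂ => DemFree s₁ ∧ DemFree s₂
  | .dem _ _ => False
  | .prob _ s₁ s₂ => DemFree s₁ ∧ DemFree s₂
  | .ifte _ s₁ s₂ => DemFree s₁ ∧ DemFree s₂
  | .whileLoop _ s => DemFree s

end PGCL

/-!
Without demonic choice the policy has nothing to resolve, so every policy produces the same
paths with the same probabilities and `𝔼` is a single expected reward rather than an infimum.
An expected reward is a sum over paths, and the indicator of `φ₁ ∨ φ₂` is at most the sum of the
indicators of `φ₁` and `φ₂`, so `𝔼[φ₁ ∨ φ₂] ≤ 𝔼[φ₁] + 𝔼[φ₂]`. It remains to split `p` into two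
bounds in `[0, 1]` below these expectations at `ε`: take `min p 𝔼[φ₁]` and the rest of `p`.
-/

/-- The bounds `f ≤ h` and `g ≤ h` transfer summability from `h`; without them a non-summable `f`,
whose `tsum` is the junk value `0`, would break the inequality. -/
theorem tsum_le_tsum_add_of_le_add {ι : Type*} {f g h : ι → ℝ} (hf : ∀ i, 0 ≤ f i)
    (hg : ∀ i, 0 ≤ g i) (hfh : ∀ i, f i ≤ h i) (hgh : ∀ i, g i ≤ h i)
    (hfgh : ∀ i, h i ≤ f i + g i) : ∑' i, h i ≤ ∑' i, f i + ∑' i, g i := by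
  by_cases hs : Summable h
  · have hfs : Summable f := hs.of_nonneg_of_le hf hfh
    have hgs : Summable g := hs.of_nonneg_of_le hg hgh
    calc ∑' i, h i ≤ ∑' i, (f i + g i) := hs.tsum_le_tsum hfgh (hfs.add hgs)
      _ = ∑' i, f i + ∑' i, g i := hfs.tsum_add hgs
  · rw [tsum_eq_zero_of_not_summable hs]
    exact add_nonneg (tsum_nonneg hf) (tsum_nonneg hg)

theorem exists_split_le_of_le_add {α : Type*} (p : α → ℝ) (hp : ∀ x, p x ∈ Set.Icc (0 : ℝ) 1)
    (x : α) {e₁ e₂ : ℝ} (he₁ : 0 ≤ e₁) (he₂ : 0 ≤ e₂) (hpx : p x ≤ e₁ + e₂) :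
    ∃ p₁ p₂ : α → ℝ,
      (∀ y, p₁ y ∈ Set.Icc (0 : ℝ) 1) ∧ (∀ y, p₂ y ∈ Set.Icc (0 : ℝ) 1) ∧
      (∀ y, p y ≤ p₁ y + p₂ y) ∧ p₁ x ≤ e₁ ∧ p₂ x ≤ e₂ := by
  refine ⟨fun y => min (p y) e₁, fun y => p y - min (p y) e₁, fun y => ?_, fun y => ?_,
    fun y => by simp, min_le_right _ _, ?_⟩
  · have := hp y
    exact ⟨le_min this.1 he₁, (min_le_left _ _).trans this.2⟩
  · have := hp y
    exact ⟨sub_nonneg.2 (min_le_left _ _), by linarith [le_min this.1 he₁, this.2]⟩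
  · rcases le_total (p x) e₁ with h | h
    · simpa [min_eq_left h] using he₂
    · simp only [min_eq_right h]
      linarith

namespace PGCL

theorem ind_nonneg (P : Prop) : 0 ≤ ind P := by
  unfold ind; split <;> norm_num

theorem ind_le_ind_of_imp {P Q : Prop} (h : P → Q) : ind P ≤ ind Q := by
  unfold ind
  split_ifs <;> simp_all

theorem ind_or_le_add (P Q : Prop) : ind (P ∨ Q) ≤ ind P + ind Q := by
  unfold ind
  split_ifs <;> simp_all

theorem sat_disj {φ₁ φ₂ : Formula} {ε : PVal} {η : LEnv} :
    Sat (Formula.disj φ₁ φ₂) ε η ↔ Sat φ₁ ε η ∨ Sat φ₂ ε η := by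
  simp only [Formula.disj, Sat]
  tauto

section Paths

variable {π π' : Policy} {σ σ' : PState} {q : ℝ}

theorem Step.nonneg (h : Step π σ q σ') : 0 ≤ q := by
  induction h with
  | probL h0 _ => exact h0
  | probR _ h1 => linarith
  | seqSkip _ ih => exact ih
  | seqStep _ ih => exact ih
  | _ => norm_num

theorem Step.demFree (h : Step π σ q σ') (hdf : DemFree σ.2) : DemFree σ'.2 := by
  induction h with
  | seqSkip _ ih => exact ih hdf.2
  | seqStep _ ih => exact ⟨ih hdf.1, hdf.2⟩
  | probL | iteT => exact hdf.1
  | probR | iteF => exact hdf.2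
  | demL | demR => exact hdf.elim
  | whileT => exact ⟨hdf, hdf⟩
  | assign | whileF => trivial

theorem Step.changePolicy (h : Step π σ q σ') (hdf : DemFree σ.2) (π' : Policy) :
    Step π' σ q σ' := by
  induction h with
  | assign => exact .assign
  | seqSkip _ ih => exact .seqSkip (ih hdf.2)
  | seqStep _ ih => exact .seqStep (ih hdf.1)
  | probL h0 h1 => exact .probL h0 h1
  | probR h0 h1 => exact .probR h0 h1
  | demL | demR => exact hdf.elim
  | iteT he => exact .iteT he
  | iteF he => exact .iteF he
  | whileT he => exact .whileT he
  | whileF he => exact .whileF he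

theorem MPath.prob_nonneg : {σ : PState} → (ρ : MPath π σ) → 0 ≤ ρ.prob
  | _, .nil _ => zero_le_one
  | _, .cons _ h rest => mul_nonneg h.nonneg rest.prob_nonneg

def MPath.changePolicy (π' : Policy) : {σ : PState} → MPath π σ → DemFree σ.2 → MPath π' σ
  | _, .nil ε, _ => .nil ε
  | _, .cons p h rest, hdf =>
      .cons p (h.changePolicy hdf π') (rest.changePolicy π' (h.demFree hdf))

@[simp]
theorem MPath.prob_changePolicy : {σ : PState} → (ρ : MPath π σ) → (hdf : DemFree σ.2) →
    (ρ.changePolicy π' hdf).prob = ρ.prob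
  | _, .nil _, _ => rfl
  | _, .cons p _ rest, _ => congrArg (p * ·) (rest.prob_changePolicy _)

@[simp]
theorem MPath.finalVal_changePolicy : {σ : PState} → (ρ : MPath π σ) → (hdf : DemFree σ.2) →
    (ρ.changePolicy π' hdf).finalVal = ρ.finalVal
  | _, .nil _, _ => rfl
  | _, .cons _ _ rest, _ => rest.finalVal_changePolicy _

@[simp]
theorem MPath.changePolicy_changePolicy : {σ : PState} → (ρ : MPath π σ) → (hdf : DemFree σ.2) →
    (ρ.changePolicy π' hdf).changePolicy π hdf = ρ
  | _, .nil _, _ => rfl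
  | _, .cons p h rest, _ => congrArg (MPath.cons p h) (rest.changePolicy_changePolicy _)

def MPath.changePolicyEquiv (π π' : Policy) (hdf : DemFree σ.2) : MPath π σ ≃ MPath π' σ where
  toFun ρ := ρ.changePolicy π' hdf
  invFun ρ := ρ.changePolicy π hdf
  left_inv ρ := ρ.changePolicy_changePolicy hdf
  right_inv ρ := ρ.changePolicy_changePolicy hdf

end Paths

theorem expReward_eq_of_demFree (π π' : Policy) {σ : PState} (hdf : DemFree σ.2)
    (r : PVal → ℝ) : expReward π σ r = expReward π' σ r := by
  unfold expReward
  rw [← (MPath.changePolicyEquiv π π' hdf).tsum_eq]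
  simp [MPath.changePolicyEquiv]

theorem expectation_eq_expReward_of_demFree (π : Policy) {σ : PState} (hdf : DemFree σ.2)
    (r : PVal → ℝ) : expectation σ r = expReward π σ r := by
  simp only [expectation, expReward_eq_of_demFree _ π hdf, ciInf_const]

theorem expReward_le_add {π : Policy} {σ : PState} {r r₁ r₂ : PVal → ℝ} (hr₁ : ∀ x, 0 ≤ r₁ x)
    (hr₂ : ∀ x, 0 ≤ r₂ x) (hr₁r : ∀ x, r₁ x ≤ r x) (hr₂r : ∀ x, r₂ x ≤ r x)
    (hr : ∀ x, r x ≤ r₁ x + r₂ x) : expReward π σ r ≤ expReward π σ r₁ + expReward π σ r₂ :=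
  tsum_le_tsum_add_of_le_add
    (fun ρ => mul_nonneg ρ.prob_nonneg (hr₁ _)) (fun ρ => mul_nonneg ρ.prob_nonneg (hr₂ _))
    (fun ρ => mul_le_mul_of_nonneg_left (hr₁r _) ρ.prob_nonneg)
    (fun ρ => mul_le_mul_of_nonneg_left (hr₂r _) ρ.prob_nonneg)
    (fun ρ => (mul_le_mul_of_nonneg_left (hr _) ρ.prob_nonneg).trans_eq (mul_add _ _ _))

theorem expectation_ind_nonneg (σ : PState) (P : PVal → Prop) :
    0 ≤ expectation σ (fun x => ind (P x)) :=
  Real.iInf_nonneg fun _ => tsum_nonneg fun ρ => mul_nonneg ρ.prob_nonneg (ind_nonneg _)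

theorem expectation_ind_or_le_add {σ : PState} (hdf : DemFree σ.2) (P Q : PVal → Prop) :
    expectation σ (fun x => ind (P x ∨ Q x)) ≤
      expectation σ (fun x => ind (P x)) + expectation σ (fun x => ind (Q x)) := by
  simp only [expectation_eq_expReward_of_demFree (fun _ => true) hdf]
  exact expReward_le_add (fun _ => ind_nonneg _) (fun _ => ind_nonneg _)
    (fun _ => ind_le_ind_of_imp Or.inl) (fun _ => ind_le_ind_of_imp Or.inr)
    (fun _ => ind_or_le_add _ _)

end PGCL

open PGCL

/-- Disjunction splits for purely probabilistic programs:
    if `s` contains no demonic choice and `ε ⊨ [s]_p (φ₁ ∨ φ₂)`, then there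
    exist expectation lower bounds `p₁, p₂` with `p₁ + p₂ ≥ p` everywhere such
    that `ε ⊨ [s]_{p₁} φ₁` and `ε ⊨ [s]_{p₂} φ₂`. -/
theorem disjunction_splits (s : Stmt) (hdf : DemFree s) (ε : PVal) (η : LEnv)
    (φ₁ φ₂ : Formula)
    (p : PVal → ℝ) (hp : ∀ ε', p ε' ∈ Set.Icc (0 : ℝ) 1)
    (h : Sat (.box s p (Formula.disj φ₁ φ₂)) ε η) :
    ∃ p₁ p₂ : PVal → ℝ,
      (∀ ε', p₁ ε' ∈ Set.Icc (0 : ℝ) 1) ∧ (∀ ε', p₂ ε' ∈ Set.Icc (0 : ℝ) 1) ∧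
      (∀ ε', p ε' ≤ p₁ ε' + p₂ ε') ∧
      Sat (.box s p₁ φ₁) ε η ∧ Sat (.box s p₂ φ₂) ε η := by
  simp only [Sat, sat_disj] at h ⊢
  exact exists_split_le_of_le_add p hp ε (expectation_ind_nonneg _ _)
    (expectation_ind_nonneg _ _) (h.trans (expectation_ind_or_le_add hdf _ _))
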